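/- Taylor expansion of the local discretization error (Lemma 2): Fix an integer s ≥ 1 and abscissae c_1, …, c_s ∈ ℝ with c_i ≥ 0, and set c_{s+1} := 1. A TSRK tableau consists of polynomial coefficient functions u_i : ℝ → ℝ and ã_{ij}, a_{ij} : ℝ → ℝ for i = 1, …, s+1 and j = 1, …, s. For integers k ≥ 1 define the polynomial Γ_{ik}(α) := (1/(k−1)!)·[ (1−u_i(α))·(−1)^k/k + Σ_{j=1}^{s} ã_{ij}(α)·(−(1−c_j))^{k−1} + Σ_{j=1}^{s} a_{ij}(α)·c_j^{k−1} − α^k/k ]. For a differentiable function y : ℝ → ℝ^d, a point t ∈ ℝ, a stepsize h > 0, an index i ∈ {1, …, s+1} and α ∈ [0, c_i], define the stage residual E_i(y, t, h, α) := y(t+αh) − (1−u_i(α))·y(t−h) − u_i(α)·y(t) − h·Σ_{j=1}^{s} ã_{ij}(α)·y′(t+(c_j−1)h) − h·Σ_{j=1}^{s} a_{ij}(α)·y′(t+c_j·h). Let p ≥ 1 be an integer, d ≥ 1, t ∈ ℝ, and suppose y : ℝ → ℝ^d is p times continuously differentiable on a neighborhood of [t−1, t+c_max], where c_max := max{c_1,…,c_{s+1}}.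 Then there exist C > 0 and h₀ ∈ (0,1] such that for all h ∈ (0, h₀], all i ∈ {1,…,s+1} and all α ∈ [0,c_i]: ‖E_i(y,t,h,α) + Σ_{k=1}^{p−1} Γ_{ik}(α)·y^{(k)}(t)·h^k‖ ≤ C·h^p. -/

import Mathlib

/-
Expand every term of the stage residual in Taylor series about `t`: `y` to order `p - 1`
with remainder `O(h^p)`, and `y'` to order `p - 2` with remainder `O(h^(p-1))`, which the
factor `h` in front of it turns into `O(h^p)`. The coefficient of `h^k y^(k)(t)` collected
from all terms is exactly `-Γ_{ik}(α)` (for `k = 0` it is `1 - (1 - u) - u = 0`), so the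
quantity to be bounded is a combination of Taylor remainders alone. Its weights `u_i`, `ã_ij`,
`a_ij` are polynomials, hence bounded for `α ∈ [0, max c]`, and every evaluation point is
`t + θh` with `θ ∈ [-1, max c]`, which makes the remainder bounds uniform in `i` and `α`.
-/

/-- The order polynomial `Γ_{ik}` of a TSRK method with `s` stages, for a row with
coefficient functions `u` (previous-values weight), `atil` (previous-step stage weights)
and `a` (current-step stage weights), with abscissae `c`. -/
noncomputable def GammaRow (s : ℕ) (c : Fin s → ℝ) (u : ℝ → ℝ) (atil a : Fin s → ℝ → ℝ)
    (k : ℕ) (α : ℝ) : ℝ :=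
  (1 / (Nat.factorial (k - 1) : ℝ)) *
    ((1 - u α) * (-1) ^ k / k
      + (∑ j, atil j α * (-(1 - c j)) ^ (k - 1))
      + (∑ j, a j α * (c j) ^ (k - 1))
      - α ^ k / k)

/-- The stage residual (local discretization error) of one row of a TSRK method:
`E_i(y,t,h,α) = y(t+αh) − (1−u(α))·y(t−h) − u(α)·y(t)
  − h·Σ_j ã_j(α)·y′(t+(c_j−1)h) − h·Σ_j a_j(α)·y′(t+c_j h)`. -/
noncomputable def stageResidual {E : Type*} [NormedAddCommGroup E] [NormedSpace ℝ E]
    (s : ℕ) (c : Fin s → ℝ) (u : ℝ → ℝ) (atil a : Fin s → ℝ → ℝ)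
    (y : ℝ → E) (t h α : ℝ) : E :=
  y (t + α * h) - (1 - u α) • y (t - h) - u α • y t
    - h • ∑ j, atil j α • deriv y (t + (c j - 1) * h)
    - h • ∑ j, a j α • deriv y (t + c j * h)

open Filter Topology Asymptotics Finset Nat

noncomputable def taylorRemainder {E : Type*} [NormedAddCommGroup E] [NormedSpace ℝ E]
    (f : ℝ → E) (m : ℕ) (x₀ δ : ℝ) : E :=
  f (x₀ + δ) - ∑ k ∈ range m, (δ ^ k / k !) • iteratedDeriv k f x₀

theorem Asymptotics.IsBigO.exists_norm_comp_mul_le {E : Type*} [SeminormedAddCommGroup E]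
    {g : ℝ → E} {m : ℕ} (hg : g =O[𝓝 0] fun δ => δ ^ m) (R : ℝ) :
    ∃ C ≥ 0, ∃ h₀ > 0, ∀ h ∈ Set.Ioc 0 h₀, ∀ θ, |θ| ≤ R → ‖g (θ * h)‖ ≤ C * h ^ m := by
  obtain ⟨c, hc, hcg⟩ := hg.exists_pos
  obtain ⟨ε, hε, hεg⟩ := Metric.eventually_nhds_iff.1 hcg.bound
  refine ⟨c * |R| ^ m, by positivity, ε / (|R| + 1), by positivity, fun h ⟨hh, hh₀⟩ θ hθ => ?_⟩
  have hθh : |θ * h| ≤ |R| * h := by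
    rw [abs_mul, abs_of_pos hh]
    exact mul_le_mul_of_nonneg_right (hθ.trans (le_abs_self R)) hh.le
  have hRh : |R| * h < ε := by
    rw [le_div_iff₀ (by positivity)] at hh₀; nlinarith [abs_nonneg R]
  calc ‖g (θ * h)‖ ≤ c * ‖(θ * h) ^ m‖ := hεg (by simpa using hθh.trans_lt hRh)
    _ ≤ c * (|R| * h) ^ m := by rw [norm_pow, Real.norm_eq_abs]; gcongr
    _ = c * |R| ^ m * h ^ m := by ring

theorem IsCompact.exists_bound_of_continuousOn_pi {α ι F : Type*} [TopologicalSpace α]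
    [Fintype ι] [SeminormedAddCommGroup F] {S : Set α} (hS : IsCompact S) {f : ι → α → F}
    (hf : ∀ i, ContinuousOn (f i) S) : ∃ K ≥ 0, ∀ i, ∀ x ∈ S, ‖f i x‖ ≤ K := by
  obtain ⟨K, hK⟩ := hS.exists_bound_of_continuousOn (continuousOn_pi.2 hf)
  exact ⟨max K 0, le_max_right _ _, fun i x hx =>
    (norm_le_pi_norm (fun i => f i x) i).trans ((hK x hx).trans (le_max_left _ _))⟩

theorem continuous_of_forall_eq_eval {R : Type*} [Semiring R] [TopologicalSpace R]
    [IsTopologicalSemiring R] {f : R → R} (hf : ∃ P : Polynomial R, ∀ x, f x = P.eval x) :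
    Continuous f := by
  obtain ⟨P, hP⟩ := hf
  rw [funext hP]
  exact P.continuous

theorem exists_bound_of_forall_eq_eval {ι κ : Type*} [Fintype ι] [Fintype κ] {u : ι → ℝ → ℝ}
    {atil a : ι → κ → ℝ → ℝ} (hu : ∀ i, ∃ P : Polynomial ℝ, ∀ x, u i x = P.eval x)
    (hatil : ∀ i j, ∃ P : Polynomial ℝ, ∀ x, atil i j x = P.eval x)
    (ha : ∀ i j, ∃ P : Polynomial ℝ, ∀ x, a i j x = P.eval x) {S : Set ℝ} (hS : IsCompact S) :
    ∃ K ≥ 0, ∀ i, ∀ x ∈ S, |u i x| ≤ K ∧ ∀ j, |atil i j x| ≤ K ∧ |a i j x| ≤ K := by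
  obtain ⟨K₁, hK₁, hu⟩ := hS.exists_bound_of_continuousOn_pi
    fun i => (continuous_of_forall_eq_eval (hu i)).continuousOn
  obtain ⟨K₂, hK₂, hatil⟩ :=
    hS.exists_bound_of_continuousOn_pi (f := fun ij : ι × κ => atil ij.1 ij.2)
    fun ij => (continuous_of_forall_eq_eval (hatil ij.1 ij.2)).continuousOn
  obtain ⟨K₃, hK₃, ha⟩ :=
    hS.exists_bound_of_continuousOn_pi (f := fun ij : ι × κ => a ij.1 ij.2)
    fun ij => (continuous_of_forall_eq_eval (ha ij.1 ij.2)).continuousOn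
  refine ⟨max K₁ (max K₂ K₃), by positivity, fun i x hx => ⟨?_, fun j => ⟨?_, ?_⟩⟩⟩
  · exact (hu i x hx).trans (le_max_left _ _)
  · exact (hatil (i, j) x hx).trans ((le_max_left _ _).trans (le_max_right _ _))
  · exact (ha (i, j) x hx).trans ((le_max_right _ _).trans (le_max_right _ _))

section

variable {E : Type*} [NormedAddCommGroup E] [NormedSpace ℝ E]

theorem isBigO_taylorRemainder {f : ℝ → E} {U : Set ℝ} {x₀ : ℝ} {m : ℕ} (hU : IsOpen U)
    (hx₀ : x₀ ∈ U) (hf : ContDiffOn ℝ m f U) :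
    taylorRemainder f m x₀ =O[𝓝 0] fun δ => δ ^ m := by
  -- Mathlib's Taylor theorem is `o(δ ^ m)` for the degree-`m` polynomial; the extra term
  -- `(δ ^ m / m !) • f^(m)(x₀)` is `O(δ ^ m)`.
  obtain ⟨r, hr, hball⟩ := Metric.isOpen_iff.1 hU x₀ hx₀
  have hx₀r := Metric.mem_ball_self (x := x₀) hr
  have hlo := taylor_isLittleO (convex_ball x₀ r) hx₀r (hf.mono hball)
  rw [Metric.isOpen_ball.nhdsWithin_eq hx₀r] at hlo
  have hshift : Tendsto (fun δ : ℝ => x₀ + δ) (𝓝 0) (𝓝 x₀) := by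
    simpa using (continuous_const_add x₀).tendsto 0
  have hsplit : taylorRemainder f m x₀ = fun δ =>
      (f (x₀ + δ) - taylorWithinEval f m (Metric.ball x₀ r) x₀ (x₀ + δ))
        + (δ ^ m / m !) • iteratedDeriv m f x₀ := by
    funext δ
    simp only [taylorRemainder, taylor_within_apply, Finset.sum_range_succ,
      iteratedDerivWithin_of_isOpen Metric.isOpen_ball hx₀r, add_sub_cancel_left, inv_mul_eq_div]
    abel
  rw [hsplit]
  refine ((hlo.comp_tendsto hshift).isBigO.congr_right (by simp)).add
    (IsBigO.of_bound ‖iteratedDeriv m f x₀‖ (Eventually.of_forall fun δ => ?_))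
  rw [norm_smul, norm_div, RCLike.norm_natCast, mul_comm]
  gcongr
  exact div_le_self (norm_nonneg _) (mod_cast factorial_pos m)

theorem exists_norm_taylorRemainder_le {f : ℝ → E} {U : Set ℝ} {x₀ : ℝ} {q : ℕ}
    (hU : IsOpen U) (hx₀ : x₀ ∈ U) (hf : ContDiffOn ℝ (q + 1) f U) (R : ℝ) :
    ∃ C ≥ 0, ∃ h₀ > 0, ∀ h ∈ Set.Ioc 0 h₀, ∀ θ, |θ| ≤ R →
      ‖taylorRemainder f (q + 1) x₀ (θ * h)‖ ≤ C * h ^ (q + 1) ∧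
        ‖taylorRemainder (deriv f) q x₀ (θ * h)‖ ≤ C * h ^ q := by
  obtain ⟨C₀, hC₀, h₀, hh₀, hf₀⟩ :=
    (isBigO_taylorRemainder hU hx₀ hf).exists_norm_comp_mul_le R
  have hf' : ContDiffOn ℝ q (deriv f) U := hf.deriv_of_isOpen hU (by simp)
  obtain ⟨C₁, hC₁, h₁, hh₁, hf₁⟩ := (isBigO_taylorRemainder hU hx₀ hf').exists_norm_comp_mul_le R
  refine ⟨max C₀ C₁, by positivity, min h₀ h₁, lt_min hh₀ hh₁, fun h ⟨hh, hh'⟩ θ hθ => ⟨?_, ?_⟩⟩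
  · exact (hf₀ h ⟨hh, hh'.trans (min_le_left _ _)⟩ θ hθ).trans (by gcongr; exact le_max_left _ _)
  · exact (hf₁ h ⟨hh, hh'.trans (min_le_right _ _)⟩ θ hθ).trans (by gcongr; exact le_max_right _ _)

theorem gammaRow_succ_mul_pow (s : ℕ) (c : Fin s → ℝ) (u : ℝ → ℝ) (atil a : Fin s → ℝ → ℝ)
    (k : ℕ) (α h : ℝ) :
    GammaRow s c u atil a (k + 1) α * h ^ (k + 1) =
      (1 - u α) * ((-h) ^ (k + 1) / (k + 1)!)
        + ∑ j, h * (atil j α * (((c j - 1) * h) ^ k / k !))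
        + ∑ j, h * (a j α * ((c j * h) ^ k / k !))
        - (α * h) ^ (k + 1) / (k + 1)! := by
  have hatil : ∑ j, h * (atil j α * (((c j - 1) * h) ^ k / k !))
      = h ^ (k + 1) / k ! * ∑ j, atil j α * (-(1 - c j)) ^ k := by
    rw [mul_sum]; refine sum_congr rfl fun j _ => ?_
    rw [show (c j - 1) * h = -(1 - c j) * h by ring, mul_pow]; ring
  have ha : ∑ j, h * (a j α * ((c j * h) ^ k / k !))
      = h ^ (k + 1) / k ! * ∑ j, a j α * c j ^ k := by
    rw [mul_sum]; refine sum_congr rfl fun j _ => ?_; ring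
  rw [hatil, ha, GammaRow, factorial_succ]
  push_cast
  field_simp
  ring

theorem sum_taylor_combination_eq (s : ℕ) (c : Fin s → ℝ) (u : ℝ → ℝ)
    (atil a : Fin s → ℝ → ℝ) (D : ℕ → E) (q : ℕ) (α h : ℝ) :
    ∑ k ∈ range (q + 1), ((α * h) ^ k / k !) • D k
      - (1 - u α) • ∑ k ∈ range (q + 1), ((-h) ^ k / k !) • D k - u α • D 0
      - h • ∑ j, atil j α • ∑ k ∈ range q, (((c j - 1) * h) ^ k / k !) • D (k + 1)
      - h • ∑ j, a j α • ∑ k ∈ range q, ((c j * h) ^ k / k !) • D (k + 1)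
      = -∑ k ∈ Icc 1 q, (GammaRow s c u atil a k α * h ^ k) • D k := by
  have hIcc : ∑ k ∈ Icc 1 q, (GammaRow s c u atil a k α * h ^ k) • D k
      = ∑ k ∈ range q, (GammaRow s c u atil a (k + 1) α * h ^ (k + 1)) • D (k + 1) := by
    rw [← Ico_add_one_right_eq_Icc, sum_Ico_eq_sum_range, add_tsub_cancel_right]
    simp only [add_comm 1]
  simp only [hIcc, gammaRow_succ_mul_pow, sum_range_succ' _ q, smul_add, smul_sum, smul_smul,
    add_smul, sub_smul, sum_add_distrib, sum_sub_distrib, sum_smul]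
  rw [sum_comm (s := univ), sum_comm (s := univ) (t := range q)]
  simp only [pow_zero, factorial_zero, cast_one, div_one, one_smul]
  module

theorem stageResidual_add_sum_gammaRow_eq (s : ℕ) (c : Fin s → ℝ) (u : ℝ → ℝ)
    (atil a : Fin s → ℝ → ℝ) (y : ℝ → E) (q : ℕ) (t h α : ℝ) :
    stageResidual s c u atil a y t h α
        + ∑ k ∈ Icc 1 q, (GammaRow s c u atil a k α * h ^ k) • iteratedDeriv k y t
      = taylorRemainder y (q + 1) t (α * h) - (1 - u α) • taylorRemainder y (q + 1) t (-h)
        - h • ∑ j, atil j α • taylorRemainder (deriv y) q t ((c j - 1) * h)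
        - h • ∑ j, a j α • taylorRemainder (deriv y) q t (c j * h) := by
  have hcomb := sum_taylor_combination_eq s c u atil a (fun k => iteratedDeriv k y t) q α h
  simp only [iteratedDeriv_succ', iteratedDeriv_zero] at hcomb
  simp only [stageResidual, taylorRemainder, smul_sub, sum_sub_distrib]
  rw [← sub_eq_add_neg t h]
  linear_combination (norm := module) hcomb

theorem norm_sum_smul_le {ι : Type*} [Fintype ι] {v : ι → ℝ} {ρ : ι → E} {K B : ℝ}
    (hv : ∀ j, |v j| ≤ K) (hρ : ∀ j, ‖ρ j‖ ≤ B) :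
    ‖∑ j, v j • ρ j‖ ≤ Fintype.card ι * (K * B) := by
  refine (norm_sum_le _ _).trans ?_
  simpa using Finset.sum_le_card_nsmul Finset.univ _ (K * B) fun j _ => by
    rw [norm_smul, Real.norm_eq_abs]
    exact mul_le_mul (hv j) (hρ j) (norm_nonneg _) ((abs_nonneg _).trans (hv j))

theorem norm_taylor_combination_le {s : ℕ} {r₀ r₁ : E} {ρ ρ' : Fin s → E} {w h K A B : ℝ}
    {v v' : Fin s → ℝ} (hh : 0 ≤ h) (hw : |w| ≤ K) (hv : ∀ j, |v j| ≤ K) (hv' : ∀ j, |v' j| ≤ K)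
    (hr₀ : ‖r₀‖ ≤ A) (hr₁ : ‖r₁‖ ≤ A) (hρ : ∀ j, ‖ρ j‖ ≤ B) (hρ' : ∀ j, ‖ρ' j‖ ≤ B) :
    ‖r₀ - (1 - w) • r₁ - h • ∑ j, v j • ρ j - h • ∑ j, v' j • ρ' j‖
      ≤ (2 + K) * A + 2 * s * K * (h * B) := by
  have h1w : ‖(1 - w) • r₁‖ ≤ (1 + K) * A := by
    rw [norm_smul, Real.norm_eq_abs]
    exact mul_le_mul ((abs_sub _ _).trans (by simpa using hw)) hr₁ (norm_nonneg _)
      (by linarith [abs_nonneg w])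
  have hsum : ∀ {v : Fin s → ℝ} {ρ : Fin s → E}, (∀ j, |v j| ≤ K) → (∀ j, ‖ρ j‖ ≤ B) →
      ‖h • ∑ j, v j • ρ j‖ ≤ h * (s * (K * B)) := fun hv hρ => by
    rw [norm_smul, Real.norm_eq_abs, abs_of_nonneg hh]
    simpa using mul_le_mul_of_nonneg_left (norm_sum_smul_le hv hρ) hh
  calc _ ≤ ‖r₀‖ + ‖(1 - w) • r₁‖ + ‖h • ∑ j, v j • ρ j‖ + ‖h • ∑ j, v' j • ρ' j‖ :=
        (norm_sub_le _ _).trans (add_le_add_left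
          ((norm_sub_le _ _).trans (add_le_add_left (norm_sub_le _ _) _)) _)
    _ ≤ A + (1 + K) * A + h * (s * (K * B)) + h * (s * (K * B)) := by
        gcongr
        exacts [hsum hv hρ, hsum hv' hρ']
    _ = (2 + K) * A + 2 * s * K * (h * B) := by ring

end

theorem tsrk_local_error_expansion_general (s d p : ℕ) (hp : 1 ≤ p)
    (c : Fin (s + 1) → ℝ) (hc : ∀ i, 0 ≤ c i)
    (u : Fin (s + 1) → ℝ → ℝ) (atil a : Fin (s + 1) → Fin s → ℝ → ℝ)
    (hu : ∀ i, ∃ P : Polynomial ℝ, ∀ x, u i x = P.eval x)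
    (hatil : ∀ i j, ∃ P : Polynomial ℝ, ∀ x, atil i j x = P.eval x)
    (ha : ∀ i j, ∃ P : Polynomial ℝ, ∀ x, a i j x = P.eval x)
    (y : ℝ → EuclideanSpace ℝ (Fin d)) (t : ℝ)
    (U : Set ℝ) (hU : IsOpen U)
    (hUsub : Set.Icc (t - 1) (t + Finset.univ.sup' Finset.univ_nonempty c) ⊆ U)
    (hy : ContDiffOn ℝ p y U) :
    ∃ C > 0, ∃ h₀ ∈ Set.Ioc (0 : ℝ) 1, ∀ h ∈ Set.Ioc (0 : ℝ) h₀, ∀ i : Fin (s + 1),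
      ∀ α ∈ Set.Icc (0 : ℝ) (c i),
        ‖stageResidual s (fun j => c j.castSucc) (u i) (atil i) (a i) y t h α
          + ∑ k ∈ Finset.Icc 1 (p - 1),
              (GammaRow s (fun j => c j.castSucc) (u i) (atil i) (a i) k α * h ^ k) •
                iteratedDeriv k y t‖ ≤ C * h ^ p := by
  obtain ⟨q, rfl⟩ : ∃ q, p = q + 1 := ⟨p - 1, by omega⟩
  set M := univ.sup' univ_nonempty c
  have hcM : ∀ i, c i ≤ M := fun i => le_sup' c (mem_univ i)
  have hM : 0 ≤ M := (hc 0).trans (hcM 0)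
  have htU : t ∈ U := hUsub ⟨by linarith, by linarith⟩
  obtain ⟨C, hC, h₀, hh₀, hR⟩ := exists_norm_taylorRemainder_le hU htU hy (M + 1)
  obtain ⟨K, hK, hcoef⟩ :=
    exists_bound_of_forall_eq_eval hu hatil ha (isCompact_Icc (a := 0) (b := M))
  refine ⟨(2 + K) * C + 2 * s * K * C + 1, by positivity, min 1 h₀,
    ⟨by positivity, min_le_left _ _⟩, fun h ⟨hh, hh'⟩ i α ⟨hα, hαc⟩ => ?_⟩
  have hh₀' : h ∈ Set.Ioc 0 h₀ := ⟨hh, hh'.trans (min_le_right _ _)⟩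
  have hαM : α ∈ Set.Icc 0 M := ⟨hα, hαc.trans (hcM i)⟩
  have hθ : ∀ θ, -1 ≤ θ → θ ≤ M → |θ| ≤ M + 1 :=
    fun θ h₁ h₂ => abs_le.2 ⟨by linarith, by linarith⟩
  have hcθ : ∀ j : Fin s, |c j.castSucc - 1| ≤ M + 1 ∧ |c j.castSucc| ≤ M + 1 := fun j =>
    ⟨hθ _ (by linarith [hc j.castSucc]) (by linarith [hcM j.castSucc]),
      hθ _ (by linarith [hc j.castSucc]) (hcM j.castSucc)⟩
  rw [Nat.add_sub_cancel, stageResidual_add_sum_gammaRow_eq]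
  refine (norm_taylor_combination_le hh.le (hcoef i α hαM).1
    (fun j => ((hcoef i α hαM).2 j).1) (fun j => ((hcoef i α hαM).2 j).2)
    (hR h hh₀' α (hθ α (by linarith) hαM.2)).1
    (by simpa using (hR h hh₀' (-1) (hθ _ le_rfl (by linarith))).1)
    (fun j => (hR h hh₀' _ (hcθ j).1).2) (fun j => (hR h hh₀' _ (hcθ j).2).2)).trans ?_
  calc _ = ((2 + K) * C + 2 * s * K * C) * h ^ (q + 1) := by ring
    _ ≤ _ := mul_le_mul_of_nonneg_right (le_add_of_nonneg_right zero_le_one) (by positivity)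

/-- Taylor expansion of the local discretization error (Lemma 2): for a `p` times
continuously differentiable solution, each stage residual equals
`−Σ_{k=1}^{p−1} Γ_{ik}(α)·y^{(k)}(t)·h^k + O(h^p)`, uniformly in `α ∈ [0,c_i]`
and in the stage index `i`. -/
theorem tsrk_local_error_expansion (s d p : ℕ) (hs : 1 ≤ s) (hd : 1 ≤ d) (hp : 1 ≤ p)
    (c : Fin (s + 1) → ℝ) (hc : ∀ i, 0 ≤ c i) (hcl : c (Fin.last s) = 1)
    (u : Fin (s + 1) → ℝ → ℝ) (atil a : Fin (s + 1) → Fin s → ℝ → ℝ)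
    (hu : ∀ i, ∃ P : Polynomial ℝ, ∀ x, u i x = P.eval x)
    (hatil : ∀ i j, ∃ P : Polynomial ℝ, ∀ x, atil i j x = P.eval x)
    (ha : ∀ i j, ∃ P : Polynomial ℝ, ∀ x, a i j x = P.eval x)
    (y : ℝ → EuclideanSpace ℝ (Fin d)) (t : ℝ)
    (U : Set ℝ) (hU : IsOpen U)
    (hUsub : Set.Icc (t - 1) (t + Finset.univ.sup' Finset.univ_nonempty c) ⊆ U)
    (hy : ContDiffOn ℝ p y U) :
    ∃ C > 0, ∃ h₀ ∈ Set.Ioc (0 : ℝ) 1, ∀ h ∈ Set.Ioc (0 : ℝ) h₀, ∀ i : Fin (s + 1),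
      ∀ α ∈ Set.Icc (0 : ℝ) (c i),
        ‖stageResidual s (fun j => c j.castSucc) (u i) (atil i) (a i) y t h α
          + ∑ k ∈ Finset.Icc 1 (p - 1),
              (GammaRow s (fun j => c j.castSucc) (u i) (atil i) (a i) k α * h ^ k) •
                iteratedDeriv k y t‖ ≤ C * h ^ p :=
  tsrk_local_error_expansion_general s d p hp c hc u atil a hu hatil ha y t U hU hUsub hy
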